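/- arXiv:2307.15869 — 6 statements merged into one kernel-verified Lean document; each statement's English description precedes it below -/
import Mathlib

section
/- Let X be a real locally convex topological vector space and let Ω ⊂ X be any (not necessarily convex) subset. Then ri(Ω) = rint(Ω) if the affine hull aff(Ω) is closed, and ri(Ω) = ∅ otherwise. In particular, ri(Ω) ⊂ rint(Ω), with equality whenever ri(Ω) ≠ ∅. -/
open Pointwise Set

/-- Interior of a set relative to its affine hull. -/
def rint {X : Type*} [AddCommGroup X] [Module ℝ X] [TopologicalSpace X] (A : Set X) : Set X :=
  {x ∈ A | ∃ V ∈ nhds (0 : X), ∀ v ∈ V, x + v ∈ (affineSpan ℝ A : Set X) → x + v ∈ A}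

/-- Interior of a set relative to the closure of its affine hull. -/
def ri {X : Type*} [AddCommGroup X] [Module ℝ X] [TopologicalSpace X] (A : Set X) : Set X :=
  {x ∈ A | ∃ V ∈ nhds (0 : X), ∀ v ∈ V, x + v ∈ closure (affineSpan ℝ A : Set X) → x + v ∈ A}

/-! When `aff Ω` is closed the two definitions coincide, so everything reduces to showing that a
point `x ∈ ri Ω` forces `aff Ω` to be closed. Given `y` in its closure, a homothety centred at `x`
with a small nonzero ratio `t` keeps `y` in the closure and moves it near `x`, hence into
`Ω ⊆ aff Ω`; the homothety of ratio `t⁻¹` brings it back to `y`, inside `aff Ω`. -/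

open Filter Topology AffineMap

theorem AffineSubspace.isClosed_of_forall_mem_closure_imp_mem {𝕜 X : Type*}
    [NontriviallyNormedField 𝕜] [AddCommGroup X] [Module 𝕜 X] [TopologicalSpace X]
    [IsTopologicalAddGroup X] [ContinuousSMul 𝕜 X] (s : AffineSubspace 𝕜 X) {x : X}
    (hx : x ∈ s) {V : Set X} (hV : V ∈ 𝓝 0)
    (h : ∀ v ∈ V, x + v ∈ closure (s : Set X) → x + v ∈ s) : IsClosed (s : Set X) := by
  refine isClosed_of_closure_subset fun y hy => ?_
  have hsmall : Tendsto (fun t : 𝕜 => t • (y - x)) (𝓝[≠] 0) (𝓝 0) := by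
    simpa using ((tendsto_id (x := 𝓝 (0 : 𝕜))).smul_const (y - x)).mono_left nhdsWithin_le_nhds
  obtain ⟨t, htV, ht⟩ := ((hsmall.eventually hV).and self_mem_nhdsWithin).exists
  have hxt : homothety x t y = x + t • (y - x) := by
    rw [homothety_apply, vsub_eq_sub, vadd_eq_add, add_comm]
  have hmem : homothety x t y ∈ s := by
    refine hxt ▸ h _ htV (hxt ▸ ?_)
    exact map_mem_closure (homothety_continuous x t) hy fun z hz => homothety_mem hx t hz
  have hback : homothety x t⁻¹ (homothety x t y) = y := by
    rw [← homothety_mul_apply, inv_mul_cancel₀ ht, homothety_one, id_apply]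
  exact hback ▸ homothety_mem hx t⁻¹ hmem

section

variable {X : Type*} [AddCommGroup X] [Module ℝ X] [TopologicalSpace X]

theorem ri_subset_rint (A : Set X) : ri A ⊆ rint A :=
  fun _ ⟨hxA, V, hV, hVA⟩ => ⟨hxA, V, hV, fun v hv hvs => hVA v hv (subset_closure hvs)⟩

theorem ri_eq_rint_of_isClosed {A : Set X} (h : IsClosed (affineSpan ℝ A : Set X)) :
    ri A = rint A := by
  rw [ri, rint, h.closure_eq]

theorem isClosed_affineSpan_of_mem_ri [IsTopologicalAddGroup X] [ContinuousSMul ℝ X]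
    {A : Set X} {x : X} (hx : x ∈ ri A) : IsClosed (affineSpan ℝ A : Set X) := by
  obtain ⟨hxA, V, hV, hVA⟩ := hx
  exact (affineSpan ℝ A).isClosed_of_forall_mem_closure_imp_mem (subset_affineSpan ℝ A hxA) hV
    fun v hv hvs => subset_affineSpan ℝ A (hVA v hv hvs)

end

theorem stmt0_general {X : Type*} [AddCommGroup X] [Module ℝ X] [TopologicalSpace X]
    [IsTopologicalAddGroup X] [ContinuousSMul ℝ X] (Ω : Set X) :
    (IsClosed (affineSpan ℝ Ω : Set X) → ri Ω = rint Ω) ∧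
    (¬ IsClosed (affineSpan ℝ Ω : Set X) → ri Ω = (∅ : Set X)) ∧
    ri Ω ⊆ rint Ω ∧ (ri Ω ≠ ∅ → ri Ω = rint Ω) := by
  refine ⟨ri_eq_rint_of_isClosed, fun hopen => ?_, ri_subset_rint Ω, fun hne => ?_⟩
  · exact eq_empty_of_forall_notMem fun x hx => hopen (isClosed_affineSpan_of_mem_ri hx)
  · obtain ⟨x, hx⟩ := nonempty_iff_ne_empty.2 hne
    exact ri_eq_rint_of_isClosed (isClosed_affineSpan_of_mem_ri hx)

theorem stmt0 {X : Type*} [AddCommGroup X] [Module ℝ X] [TopologicalSpace X]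
    [IsTopologicalAddGroup X] [ContinuousSMul ℝ X] [LocallyConvexSpace ℝ X] (Ω : Set X) :
    (IsClosed (affineSpan ℝ Ω : Set X) → ri Ω = rint Ω) ∧
    (¬ IsClosed (affineSpan ℝ Ω : Set X) → ri Ω = (∅ : Set X)) ∧
    ri Ω ⊆ rint Ω ∧ (ri Ω ≠ ∅ → ri Ω = rint Ω) :=
  stmt0_general Ω
end

section
/- Let X be a real vector space and let Ω ⊂ X be a nonempty convex set. Then for every w ∈ Ω one has span(Ω−w) = cone(Ω−Ω), where Ω−Ω := {u − v : u, v ∈ Ω}. -/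
/-
For convex `Ω` the set `Ω - Ω` is convex, contains `0` and is symmetric, and the conic hull of
such a set is closed under addition (a positive combination rescales to a convex combination)
and under negation, hence is a subspace: it equals `span (Ω - Ω)`. Finally `Ω - Ω` and `Ω - {w}`
span the same subspace because `u - v = (u - w) - (v - w)`.
-/

open Pointwise Set

/-- Conic hull: `cone(A) = {λa : λ ≥ 0, a ∈ A}`. -/
def coneHull {Z : Type*} [AddCommGroup Z] [Module ℝ Z] (A : Set Z) : Set Z :=
  {y | ∃ c : ℝ, 0 ≤ c ∧ ∃ a ∈ A, y = c • a}

section ConeHull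

variable {Z : Type*} [AddCommGroup Z] [Module ℝ Z] {C : Set Z}

theorem subset_coneHull : C ⊆ coneHull C :=
  fun x hx => ⟨1, zero_le_one, x, hx, (one_smul ℝ x).symm⟩

theorem smul_mem_coneHull {c : ℝ} (hc : 0 ≤ c) {x : Z} (hx : x ∈ coneHull C) :
    c • x ∈ coneHull C := by
  obtain ⟨d, hd, a, ha, rfl⟩ := hx
  exact ⟨c * d, mul_nonneg hc hd, a, ha, smul_smul c d a⟩

theorem neg_mem_coneHull (hneg : ∀ x ∈ C, -x ∈ C) {x : Z} (hx : x ∈ coneHull C) :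
    -x ∈ coneHull C := by
  obtain ⟨c, hc, a, ha, rfl⟩ := hx
  exact ⟨c, hc, -a, hneg a ha, (smul_neg c a).symm⟩

theorem add_mem_coneHull (hC : Convex ℝ C) (h0 : (0 : Z) ∈ C) {x y : Z}
    (hx : x ∈ coneHull C) (hy : y ∈ coneHull C) : x + y ∈ coneHull C := by
  obtain ⟨a, ha, p, hp, rfl⟩ := hx
  obtain ⟨b, hb, q, hq, rfl⟩ := hy
  rcases (add_nonneg ha hb).eq_or_lt with hab | hab
  · obtain ⟨rfl, rfl⟩ : a = 0 ∧ b = 0 := ⟨by linarith, by linarith⟩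
    exact ⟨0, le_rfl, 0, h0, by simp⟩
  · refine ⟨a + b, hab.le, _, convex_iff_div.1 hC hp hq ha hb hab, ?_⟩
    simp only [smul_add, smul_smul, mul_div_cancel₀ _ hab.ne']

theorem coneHull_eq_span (hC : Convex ℝ C) (h0 : (0 : Z) ∈ C) (hneg : ∀ x ∈ C, -x ∈ C) :
    coneHull C = Submodule.span ℝ C := by
  refine Subset.antisymm ?_ fun x hx => ?_
  · rintro _ ⟨c, -, a, ha, rfl⟩
    exact Submodule.smul_mem _ c (Submodule.subset_span ha)
  induction hx using Submodule.span_induction with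
  | mem x hx => exact subset_coneHull hx
  | zero => exact subset_coneHull h0
  | add x y _ _ hx hy => exact add_mem_coneHull hC h0 hx hy
  | smul c x _ hx =>
    rcases le_or_gt 0 c with hc | hc
    · exact smul_mem_coneHull hc hx
    · rw [← neg_smul_neg]
      exact smul_mem_coneHull (neg_nonneg.2 hc.le) (neg_mem_coneHull hneg hx)

end ConeHull

theorem span_sub_self_eq_span_sub_singleton {R M : Type*} [Ring R] [AddCommGroup M] [Module R M]
    {Ω : Set M} {w : M} (hw : w ∈ Ω) :
    Submodule.span R (Ω - Ω) = Submodule.span R (Ω - {w}) := by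
  refine le_antisymm (Submodule.span_le.2 fun x hx => ?_)
    (Submodule.span_mono (sub_subset_sub_left (singleton_subset_iff.2 hw)))
  obtain ⟨u, hu, v, hv, rfl⟩ := mem_sub.1 hx
  rw [SetLike.mem_coe, ← sub_sub_sub_cancel_right u v w]
  exact sub_mem (Submodule.subset_span (sub_mem_sub hu (mem_singleton w)))
    (Submodule.subset_span (sub_mem_sub hv (mem_singleton w)))

theorem stmt3_general {X : Type*} [AddCommGroup X] [Module ℝ X] (Ω : Set X)
    (hconv : Convex ℝ Ω) (w : X) (hw : w ∈ Ω) :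
    (Submodule.span ℝ (Ω - {w}) : Set X) = coneHull (Ω - Ω) := by
  have hsymm : ∀ x ∈ Ω - Ω, -x ∈ Ω - Ω := by
    rintro _ ⟨u, hu, v, hv, rfl⟩
    exact ⟨v, hv, u, hu, (neg_sub u v).symm⟩
  rw [coneHull_eq_span (hconv.sub hconv) (sub_self w ▸ sub_mem_sub hw hw) hsymm,
    span_sub_self_eq_span_sub_singleton hw]

theorem stmt3 {X : Type*} [AddCommGroup X] [Module ℝ X] (Ω : Set X) (hne : Ω.Nonempty)
    (hconv : Convex ℝ Ω) (w : X) (hw : w ∈ Ω) :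
    (Submodule.span ℝ (Ω - {w}) : Set X) = coneHull (Ω - Ω) :=
  stmt3_general Ω hconv w hw
end

section
/- Let X be a real locally convex topological vector space and let Ω ⊂ X be a nonempty convex set. Then sqri(Ω) = iri(Ω) if the affine hull aff(Ω) is closed, and sqri(Ω) = ∅ otherwise. -/
open Pointwise Set

/-- A set is a linear subspace if it underlies some `ℝ`-submodule. -/
def IsLinearSubspace {Z : Type*} [AddCommGroup Z] [Module ℝ Z] (S : Set Z) : Prop :=
  ∃ L : Submodule ℝ Z, (L : Set Z) = S

/-- Intrinsic relative interior. -/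
def iri {Z : Type*} [AddCommGroup Z] [Module ℝ Z] (A : Set Z) : Set Z :=
  {x ∈ A | IsLinearSubspace (coneHull (A - {x}))}

/-- Strong quasi-relative interior. -/
def sqri {Z : Type*} [AddCommGroup Z] [Module ℝ Z] [TopologicalSpace Z] (A : Set Z) : Set Z :=
  {x ∈ A | IsLinearSubspace (coneHull (A - {x})) ∧ IsClosed (coneHull (A - {x}))}

/-! At a point `x` of `iri Ω` the cone `cone(Ω - x)` is a subspace containing `Ω - x`, hence it is
the span of `Ω - x`, i.e. the direction of `aff Ω`; and `aff Ω = x + direction` is closed exactly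
when its direction is. -/

lemma AffineSubspace.isClosed_direction_iff_of_mem {R V P : Type*} [Ring R] [AddCommGroup V]
    [Module R V] [TopologicalSpace V] [TopologicalSpace P] [AddTorsor V P]
    [IsTopologicalAddTorsor P] {s : AffineSubspace R P} {x : P} (hx : x ∈ s) :
    IsClosed (s.direction : Set V) ↔ IsClosed (s : Set P) := by
  rw [← (Homeomorph.vaddConst x).symm.isClosed_image, coe_direction_eq_vsub_set_right hx]
  simp only [Homeomorph.vaddConst_symm_apply]

section

variable {Z : Type*} [AddCommGroup Z] [Module ℝ Z]

lemma subset_coneHull_s5 (A : Set Z) : A ⊆ coneHull A :=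
  fun a ha ↦ ⟨1, zero_le_one, a, ha, (one_smul ℝ a).symm⟩

lemma coneHull_subset_span (A : Set Z) : coneHull A ⊆ Submodule.span ℝ A := by
  rintro _ ⟨c, -, a, ha, rfl⟩
  exact Submodule.smul_mem _ c (Submodule.subset_span ha)

lemma IsLinearSubspace.coneHull_eq_span {A : Set Z} (h : IsLinearSubspace (coneHull A)) :
    coneHull A = Submodule.span ℝ A := by
  obtain ⟨L, hL⟩ := h
  refine (coneHull_subset_span A).antisymm ?_
  rw [← hL, SetLike.coe_subset_coe, Submodule.span_le, hL]
  exact subset_coneHull_s5 A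

lemma span_sub_singleton_eq_vectorSpan {A : Set Z} {x : Z} (hx : x ∈ A) :
    Submodule.span ℝ (A - {x}) = vectorSpan ℝ A := by
  rw [vectorSpan_eq_span_vsub_set_right ℝ hx, sub_singleton]
  rfl

lemma coneHull_sub_singleton_eq_vectorSpan {A : Set Z} {x : Z} (hx : x ∈ iri A) :
    coneHull (A - {x}) = vectorSpan ℝ A := by
  rw [hx.2.coneHull_eq_span, span_sub_singleton_eq_vectorSpan hx.1]

lemma mem_sqri_iff [TopologicalSpace Z] [IsTopologicalAddGroup Z] {A : Set Z} {x : Z} :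
    x ∈ sqri A ↔ x ∈ iri A ∧ IsClosed (affineSpan ℝ A : Set Z) := by
  refine ⟨fun ⟨hxA, hlin, hcl⟩ ↦ ⟨⟨hxA, hlin⟩, ?_⟩, fun ⟨hx, hcl⟩ ↦ ⟨hx.1, hx.2, ?_⟩⟩
  · rw [coneHull_sub_singleton_eq_vectorSpan ⟨hxA, hlin⟩, ← direction_affineSpan] at hcl
    exact (AffineSubspace.isClosed_direction_iff_of_mem (mem_affineSpan ℝ hxA)).mp hcl
  · rw [coneHull_sub_singleton_eq_vectorSpan hx, ← direction_affineSpan]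
    exact (AffineSubspace.isClosed_direction_iff_of_mem (mem_affineSpan ℝ hx.1)).mpr hcl

end

theorem stmt5_general {X : Type*} [AddCommGroup X] [Module ℝ X] [TopologicalSpace X]
    [IsTopologicalAddGroup X] (Ω : Set X) :
    (IsClosed (affineSpan ℝ Ω : Set X) → sqri Ω = iri Ω) ∧
    (¬ IsClosed (affineSpan ℝ Ω : Set X) → sqri Ω = (∅ : Set X)) := by
  refine ⟨fun hcl ↦ ?_, fun hncl ↦ ?_⟩
  · ext x
    simp only [mem_sqri_iff, hcl, and_true]
  · ext x
    simp only [mem_sqri_iff, hncl, and_false, mem_empty_iff_false]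

theorem stmt5 {X : Type*} [AddCommGroup X] [Module ℝ X] [TopologicalSpace X]
    [IsTopologicalAddGroup X] [ContinuousSMul ℝ X] [LocallyConvexSpace ℝ X]
    (Ω : Set X) (hne : Ω.Nonempty) (hconv : Convex ℝ Ω) :
    (IsClosed (affineSpan ℝ Ω : Set X) → sqri Ω = iri Ω) ∧
    (¬ IsClosed (affineSpan ℝ Ω : Set X) → sqri Ω = (∅ : Set X)) :=
  stmt5_general Ω
end

section
/- Let X and Y be real vector spaces, let T : X → Y be a linear mapping, and let Ω ⊂ X. Then T(iri(Ω)) ⊂ iri(T(Ω)). Moreover, if Ω is convex and iri(Ω) ≠ ∅, then T(iri(Ω)) = iri(T(Ω)). -/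
/-!
The cone `cone(Ω - x)` of a set at a point commutes with linear images, and so do linear
subspaces; this gives `T(iri Ω) ⊆ iri(TΩ)`. For convex `Ω` the cone at `x ∈ Ω` is a convex cone,
so it is a subspace exactly when it contains `x - a` for every `a ∈ Ω`. With this criterion one
checks that moving from `x ∈ iri Ω` towards any `u ∈ Ω` (but not all the way) stays in `iri Ω`.
Conversely, if `y ∈ iri(TΩ)` and `x ∈ iri Ω`, then `y - Tx` lies in the cone of `TΩ` at `y`,
i.e. `y` lies strictly between `Tx` and some `Tu` with `u ∈ Ω`, so `y` is the image of a point of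
`iri Ω`.
-/

open Pointwise Set

section Module

variable {Z : Type*} [AddCommGroup Z] [Module ℝ Z]

lemma mem_coneHull_sub_singleton {A : Set Z} {x z : Z} :
    z ∈ coneHull (A - {x}) ↔ ∃ c : ℝ, 0 ≤ c ∧ ∃ a ∈ A, z = c • (a - x) := by
  simp [coneHull, Set.sub_singleton]

lemma smul_mem_coneHull_s9 {A : Set Z} {c : ℝ} (hc : 0 ≤ c) {z : Z} (hz : z ∈ coneHull A) :
    c • z ∈ coneHull A := by
  obtain ⟨d, hd, a, ha, rfl⟩ := hz
  exact ⟨c * d, mul_nonneg hc hd, a, ha, (mul_smul c d a).symm⟩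

lemma sub_mem_coneHull_sub_singleton {A : Set Z} {x a : Z} (ha : a ∈ A) :
    a - x ∈ coneHull (A - {x}) :=
  mem_coneHull_sub_singleton.2 ⟨1, zero_le_one, a, ha, (one_smul ℝ _).symm⟩

lemma IsLinearSubspace.neg_mem {S : Set Z} (hS : IsLinearSubspace S) {z : Z} (hz : z ∈ S) :
    -z ∈ S := by
  obtain ⟨L, rfl⟩ := hS
  exact L.neg_mem hz

lemma IsLinearSubspace.sub_mem_coneHull_sub_singleton {A : Set Z} {x a : Z}
    (hA : IsLinearSubspace (coneHull (A - {x}))) (ha : a ∈ A) :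
    x - a ∈ coneHull (A - {x}) := by
  simpa using hA.neg_mem (_root_.sub_mem_coneHull_sub_singleton ha)

lemma Convex.add_mem_coneHull_sub_singleton {Ω : Set Z} (hΩ : Convex ℝ Ω) {x u v : Z}
    (hu : u ∈ coneHull (Ω - {x})) (hv : v ∈ coneHull (Ω - {x})) :
    u + v ∈ coneHull (Ω - {x}) := by
  obtain ⟨a, ha, p, hp, rfl⟩ := mem_coneHull_sub_singleton.1 hu
  obtain ⟨b, hb, q, hq, rfl⟩ := mem_coneHull_sub_singleton.1 hv
  rcases (add_nonneg ha hb).eq_or_lt with hs | hs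
  · obtain ⟨rfl, rfl⟩ : a = 0 ∧ b = 0 := ⟨by linarith, by linarith⟩
    simpa using smul_mem_coneHull_s9 le_rfl hu
  -- `a (p - x) + b (q - x) = (a + b) (r - x)` with `r` the convex combination of `p` and `q`
  refine mem_coneHull_sub_singleton.2 ⟨a + b, hs.le, (a / (a + b)) • p + (b / (a + b)) • q,
    hΩ hp hq (by positivity) (by positivity) (by field_simp), ?_⟩
  match_scalars <;> field_simp
  ring

lemma Convex.isLinearSubspace_coneHull_sub_singleton_iff {Ω : Set Z} (hΩ : Convex ℝ Ω) {x : Z}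
    (hx : x ∈ Ω) :
    IsLinearSubspace (coneHull (Ω - {x})) ↔ ∀ a ∈ Ω, x - a ∈ coneHull (Ω - {x}) := by
  refine ⟨fun hS a ha => hS.sub_mem_coneHull_sub_singleton ha, fun hsymm => ?_⟩
  refine ⟨{ carrier := coneHull (Ω - {x})
            zero_mem' := by simpa using sub_mem_coneHull_sub_singleton (x := x) hx
            add_mem' := hΩ.add_mem_coneHull_sub_singleton
            smul_mem' := ?_ }, rfl⟩
  intro c z hz
  rcases le_or_gt 0 c with hc | hc
  · exact smul_mem_coneHull_s9 hc hz
  · obtain ⟨d, hd, a, ha, rfl⟩ := mem_coneHull_sub_singleton.1 hz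
    have h := smul_mem_coneHull_s9 (mul_nonneg (neg_nonneg.2 hc.le) hd) (hsymm a ha)
    convert h using 1
    module

lemma Convex.coneHull_sub_singleton_subset {Ω : Set Z} (hΩ : Convex ℝ Ω) (x : Z) {u : Z}
    (hu : u ∈ Ω) {t : ℝ} (ht0 : 0 < t) (ht1 : t ≤ 1) :
    coneHull (Ω - {x}) ⊆ coneHull (Ω - {t • x + (1 - t) • u}) := by
  intro z hz
  obtain ⟨c, hc, a, ha, rfl⟩ := mem_coneHull_sub_singleton.1 hz
  refine mem_coneHull_sub_singleton.2
    ⟨c / t, by positivity, t • a + (1 - t) • u, hΩ ha hu ht0.le (by linarith) (by ring), ?_⟩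
  match_scalars <;> field_simp
  ring

lemma Convex.smul_add_one_sub_smul_mem_iri {Ω : Set Z} (hΩ : Convex ℝ Ω) {x u : Z}
    (hx : x ∈ iri Ω) (hu : u ∈ Ω) {t : ℝ} (ht0 : 0 < t) (ht1 : t ≤ 1) :
    t • x + (1 - t) • u ∈ iri Ω := by
  obtain ⟨hxΩ, hcone⟩ := hx
  have hsymm := (hΩ.isLinearSubspace_coneHull_sub_singleton_iff hxΩ).1 hcone
  have hwΩ : t • x + (1 - t) • u ∈ Ω := hΩ hxΩ hu ht0.le (by linarith) (by ring)
  refine ⟨hwΩ, (hΩ.isLinearSubspace_coneHull_sub_singleton_iff hwΩ).2 fun a ha => ?_⟩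
  apply hΩ.coneHull_sub_singleton_subset x hu ht0 ht1
  have hux : (1 - t) • (u - x) ∈ coneHull (Ω - {x}) :=
    smul_mem_coneHull_s9 (by linarith) (sub_mem_coneHull_sub_singleton hu)
  convert hΩ.add_mem_coneHull_sub_singleton hux (hsymm a ha) using 1
  module

end Module

section LinearMap

variable {X Y : Type*} [AddCommGroup X] [Module ℝ X] [AddCommGroup Y] [Module ℝ Y]

lemma coneHull_image (T : X →ₗ[ℝ] Y) (A : Set X) : coneHull (T '' A) = T '' coneHull A := by
  ext y
  constructor
  · rintro ⟨c, hc, _, ⟨a, ha, rfl⟩, rfl⟩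
    exact ⟨c • a, ⟨c, hc, a, ha, rfl⟩, T.map_smul c a⟩
  · rintro ⟨_, ⟨c, hc, a, ha, rfl⟩, rfl⟩
    exact ⟨c, hc, T a, ⟨a, ha, rfl⟩, T.map_smul c a⟩

lemma IsLinearSubspace.image {S : Set X} (hS : IsLinearSubspace S) (T : X →ₗ[ℝ] Y) :
    IsLinearSubspace (T '' S) := by
  obtain ⟨L, rfl⟩ := hS
  exact ⟨L.map T, Submodule.map_coe T L⟩

lemma image_iri_subset (T : X →ₗ[ℝ] Y) (Ω : Set X) : T '' iri Ω ⊆ iri (T '' Ω) := by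
  rintro _ ⟨x, ⟨hxΩ, hcone⟩, rfl⟩
  refine ⟨mem_image_of_mem T hxΩ, ?_⟩
  rw [← image_singleton, ← Set.image_sub, coneHull_image]
  exact hcone.image T

lemma iri_image_subset_image_iri (T : X →ₗ[ℝ] Y) {Ω : Set X} (hΩ : Convex ℝ Ω) {x : X}
    (hx : x ∈ iri Ω) : iri (T '' Ω) ⊆ T '' iri Ω := by
  rintro y ⟨-, hcone⟩
  obtain ⟨c, hc, _, ⟨u, hu, rfl⟩, hyx⟩ :=
    mem_coneHull_sub_singleton.1 (hcone.neg_mem (sub_mem_coneHull_sub_singleton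
      (mem_image_of_mem T hx.1)))
  -- `y - T x = c • (T u - y)` puts `y` on the segment from `T x` to `T u`
  refine ⟨(1 + c)⁻¹ • x + (1 - (1 + c)⁻¹) • u,
    hΩ.smul_add_one_sub_smul_mem_iri hx hu (by positivity) (inv_le_one_of_one_le₀ (by linarith)),
    ?_⟩
  have hc1 : 1 + c ≠ 0 := by positivity
  have hy : y = (1 + c)⁻¹ • (T x + c • T u) := by
    rw [neg_sub] at hyx
    rw [eq_inv_smul_iff₀ hc1]
    linear_combination (norm := module) hyx
  rw [hy, map_add, map_smul, map_smul]
  match_scalars <;> field_simp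
  ring

end LinearMap

theorem stmt9 {X Y : Type*} [AddCommGroup X] [Module ℝ X] [AddCommGroup Y] [Module ℝ Y]
    (T : X →ₗ[ℝ] Y) (Ω : Set X) :
    T '' iri Ω ⊆ iri (T '' Ω) ∧
    (Convex ℝ Ω → (iri Ω).Nonempty → T '' iri Ω = iri (T '' Ω)) :=
  ⟨image_iri_subset T Ω, fun hΩ ⟨_, hx⟩ =>
    (image_iri_subset T Ω).antisymm (iri_image_subset_image_iri T hΩ hx)⟩
end

section
/- Let X and Y be real locally convex topological vector spaces and let F : X ⇒ Y be a set-valued mapping such that the interior int(F(x)) is nonempty for every x ∈ dom(F). Then aff(gph(F)) = aff(dom(F)) × Y. -/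
open Pointwise Set

/-- Domain of a set-valued mapping. -/
def svmDom {X Y : Type*} (F : X → Set Y) : Set X := {x | (F x).Nonempty}

/-- Graph of a set-valued mapping. -/
def svmGph {X Y : Type*} (F : X → Set Y) : Set (X × Y) := {p | p.2 ∈ F p.1}

/-!
Proof idea: a set with nonempty interior spans its whole space affinely (translate it to an open
set contained in its vector span, and a submodule with nonempty interior is everything). Hence,
for `x ∈ dom F`, the affine span of `{x} × F x ⊆ gph F` is `{x} × Y`, so `dom F × Y` lies in
`aff (gph F)`. Since also `gph F ⊆ dom F × Y`, both sets have the same affine span, and the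
affine span of a product is the product of the affine spans.
-/

open Filter Topology in
theorem affineSpan_eq_top_of_interior_nonempty {k M : Type*} [Ring k] [TopologicalSpace k]
    [NeBot (𝓝[{ c : k | IsUnit c }] 0)] [AddCommGroup M] [Module k M] [TopologicalSpace M]
    [IsTopologicalAddGroup M] [ContinuousSMul k M] {s : Set M} (hs : (interior s).Nonempty) :
    affineSpan k s = ⊤ := by
  obtain ⟨y₀, hy₀⟩ := hs
  rw [AffineSubspace.affineSpan_eq_top_iff_vectorSpan_eq_top_of_nonempty k M M
    ⟨y₀, interior_subset hy₀⟩]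
  apply Submodule.eq_top_of_nonempty_interior'
  have hsub : (· - y₀) '' interior s ⊆ (vectorSpan k s : Set M) := by
    rintro _ ⟨y, hy, rfl⟩
    exact vsub_mem_vectorSpan k (interior_subset hy) (interior_subset hy₀)
  have hopen : IsOpen ((· - y₀) '' interior s) :=
    (Homeomorph.subRight y₀).isOpenMap _ isOpen_interior
  exact ⟨y₀ - y₀, interior_maximal hsub hopen ⟨y₀, hy₀, rfl⟩⟩

theorem svmGph_subset_svmDom_prod_univ {P Q : Type*} (F : P → Set Q) :
    svmGph F ⊆ svmDom F ×ˢ univ :=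
  fun p hp => ⟨⟨p.2, hp⟩, trivial⟩

section SetValued

variable {k V W P Q : Type*} [Ring k] [AddCommGroup V] [Module k V] [AddTorsor V P]
  [AddCommGroup W] [Module k W] [AddTorsor W Q]

theorem svmDom_prod_univ_subset_affineSpan_svmGph {F : P → Set Q}
    (hF : ∀ x ∈ svmDom F, affineSpan k (F x) = ⊤) :
    svmDom F ×ˢ univ ⊆ (affineSpan k (svmGph F) : Set (P × Q)) := by
  rintro ⟨x, y⟩ ⟨hx, -⟩
  have hfiber : affineSpan k ({x} ×ˢ F x) ≤ affineSpan k (svmGph F) :=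
    affineSpan_mono k fun p ⟨hp₁, hp₂⟩ => by rwa [svmGph, mem_ofPred_eq, eq_of_mem_singleton hp₁]
  apply hfiber
  rw [affineSpan_prod_eq, hF x hx, AffineSubspace.mem_prod]
  exact ⟨mem_affineSpan k rfl, AffineSubspace.mem_top k W y⟩

theorem affineSpan_svmGph_eq_prod_top {F : P → Set Q}
    (hF : ∀ x ∈ svmDom F, affineSpan k (F x) = ⊤) :
    affineSpan k (svmGph F) = (affineSpan k (svmDom F)).prod ⊤ := by
  rw [← AffineSubspace.span_univ, ← affineSpan_prod_eq]
  exact le_antisymm (affineSpan_mono k (svmGph_subset_svmDom_prod_univ F))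
    (affineSpan_le.mpr (svmDom_prod_univ_subset_affineSpan_svmGph hF))

end SetValued

theorem stmt12_general {X Y : Type*}
    [AddCommGroup X] [Module ℝ X]
    [AddCommGroup Y] [Module ℝ Y] [TopologicalSpace Y]
    [IsTopologicalAddGroup Y] [ContinuousSMul ℝ Y]
    (F : X → Set Y) (h : ∀ x ∈ svmDom F, (interior (F x)).Nonempty) :
    (affineSpan ℝ (svmGph F) : Set (X × Y)) =
      (affineSpan ℝ (svmDom F) : Set X) ×ˢ (univ : Set Y) := by
  rw [affineSpan_svmGph_eq_prod_top fun x hx => affineSpan_eq_top_of_interior_nonempty (h x hx),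
    AffineSubspace.coe_prod, AffineSubspace.top_coe]

theorem stmt12 {X Y : Type*}
    [AddCommGroup X] [Module ℝ X] [TopologicalSpace X]
    [IsTopologicalAddGroup X] [ContinuousSMul ℝ X] [LocallyConvexSpace ℝ X]
    [AddCommGroup Y] [Module ℝ Y] [TopologicalSpace Y]
    [IsTopologicalAddGroup Y] [ContinuousSMul ℝ Y] [LocallyConvexSpace ℝ Y]
    (F : X → Set Y) (h : ∀ x ∈ svmDom F, (interior (F x)).Nonempty) :
    (affineSpan ℝ (svmGph F) : Set (X × Y)) =
      (affineSpan ℝ (svmDom F) : Set X) ×ˢ (univ : Set Y) :=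
  stmt12_general F h
end

section
/- Let X and Y be real locally convex topological vector spaces and let F : X ⇒ Y be a set-valued mapping whose graph gph(F) is convex and such that int(F(x)) ≠ ∅ for every x ∈ dom(F). Then sqri(gph(F)) = {(x,y) ∈ X × Y : x ∈ sqri(dom(F)) and y ∈ sqri(F(x))}. -/
/-!
If `y` is an interior point of `F x`, every vertical vector `(0, v)` lies in the cone generated by
`gph F - (x, y)`, and since that cone is convex it is exactly the cylinder over
`cone (dom F - x)`; being a closed subspace then passes between the two cones. Conversely, the
vertical slice of `cone (gph F - (x, y))` is `cone (F x - y)`, and when that is a subspace while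
`F x` has an interior point `y'`, the point `y` lies on a segment from a point of `F x` to `y'`,
hence is interior. Thus each side of the identity forces `y ∈ int (F x) = sqri (F x)`, and the
first observation finishes the proof.
-/

open Pointwise Set

open Filter Topology

section ConeHull

variable {Z W : Type*} [AddCommGroup Z] [Module ℝ Z] [AddCommGroup W] [Module ℝ W]

lemma mem_coneHull_sub {A : Set Z} {a v : Z} :
    v ∈ coneHull (A - {a}) ↔ ∃ c : ℝ, 0 ≤ c ∧ ∃ p ∈ A, v = c • (p - a) := by
  simp only [coneHull, sub_singleton, mem_image, exists_exists_and_eq_and, mem_ofPred_eq]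

lemma coneHull_eq_hull {s : Set Z} (hs : Convex ℝ s) (h0 : (0 : Z) ∈ s) :
    coneHull s = ConvexCone.hull ℝ s := by
  ext v
  rw [SetLike.mem_coe, ConvexCone.mem_hull_of_convex hs]
  constructor
  · rintro ⟨c, hc, a, ha, rfl⟩
    rcases hc.eq_or_lt with rfl | hc
    · exact ⟨1, one_pos, 0, h0, by simp⟩
    · exact ⟨c, hc, smul_mem_smul_set ha⟩
  · rintro ⟨c, hc, a, ha, rfl⟩
    exact ⟨c, hc.le, a, ha, rfl⟩

lemma add_mem_coneHull_sub {A : Set Z} {a u v : Z} (hA : Convex ℝ A) (ha : a ∈ A)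
    (hu : u ∈ coneHull (A - {a})) (hv : v ∈ coneHull (A - {a})) :
    u + v ∈ coneHull (A - {a}) := by
  have hconv : Convex ℝ (A - {a}) := hA.sub (convex_singleton a)
  have h0 : (0 : Z) ∈ A - {a} := ⟨a, ha, a, rfl, sub_self a⟩
  rw [coneHull_eq_hull hconv h0] at hu hv ⊢
  exact (ConvexCone.hull ℝ _).add_mem hu hv

lemma IsLinearSubspace.preimage {S : Set W} (hS : IsLinearSubspace S) (f : Z →ₗ[ℝ] W) :
    IsLinearSubspace (f ⁻¹' S) := by
  obtain ⟨L, rfl⟩ := hS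
  exact ⟨L.comap f, rfl⟩

lemma isLinearSubspace_preimage_fst_iff {S : Set Z} :
    IsLinearSubspace (Prod.fst ⁻¹' S : Set (Z × W)) ↔ IsLinearSubspace S :=
  ⟨fun h ↦ h.preimage (LinearMap.inl ℝ Z W), fun h ↦ h.preimage (LinearMap.fst ℝ Z W)⟩

end ConeHull

section Topological

variable {Z : Type*} [AddCommGroup Z] [Module ℝ Z] [TopologicalSpace Z]

lemma exists_pos_add_smul_mem [ContinuousAdd Z] [ContinuousSMul ℝ Z] {s : Set Z} {y : Z}
    (hs : s ∈ 𝓝 y) (w : Z) : ∃ t : ℝ, 0 < t ∧ y + t • w ∈ s := by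
  have hline : Tendsto (fun t : ℝ ↦ y + t • w) (𝓝[>] 0) (𝓝 y) := by
    have := (tendsto_const_nhds (x := y)).add ((tendsto_id (x := 𝓝 (0 : ℝ))).smul_const w)
    simpa using this.mono_left nhdsWithin_le_nhds
  obtain ⟨t, hts, ht⟩ := ((hline.eventually hs).and self_mem_nhdsWithin).exists
  exact ⟨t, ht, hts⟩

lemma coneHull_sub_eq_univ [ContinuousAdd Z] [ContinuousSMul ℝ Z] {s : Set Z} {y : Z}
    (hy : y ∈ interior s) : coneHull (s - {y}) = univ := by
  refine eq_univ_of_forall fun w ↦ ?_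
  obtain ⟨t, ht, hts⟩ := exists_pos_add_smul_mem (mem_interior_iff_mem_nhds.1 hy) w
  refine mem_coneHull_sub.2 ⟨t⁻¹, inv_nonneg.2 ht.le, y + t • w, hts, ?_⟩
  rw [add_sub_cancel_left, smul_smul, inv_mul_cancel₀ ht.ne', one_smul]

lemma mem_interior_of_isLinearSubspace_coneHull [IsTopologicalAddGroup Z]
    [ContinuousConstSMul ℝ Z] {s : Set Z} {y : Z} (hs : Convex ℝ s)
    (hint : (interior s).Nonempty) (hsub : IsLinearSubspace (coneHull (s - {y}))) :
    y ∈ interior s := by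
  obtain ⟨L, hL⟩ := hsub
  obtain ⟨y', hy'⟩ := hint
  have hfwd : y' - y ∈ coneHull (s - {y}) :=
    mem_coneHull_sub.2 ⟨1, zero_le_one, y', interior_subset hy', (one_smul ℝ _).symm⟩
  have hback : y - y' ∈ coneHull (s - {y}) := by
    rw [← hL] at hfwd ⊢
    simpa using L.neg_mem hfwd
  obtain ⟨c, hc, y'', hy'', heq⟩ := mem_coneHull_sub.1 hback
  -- `y` lies on the segment `(y'', y']`, whose points off `y''` are interior
  have hpos : (0 : ℝ) < 1 + c := by linarith
  have hy_eq : y = y'' + (1 + c)⁻¹ • (y' - y'') := by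
    have : y' - y'' = (1 + c) • (y - y'') := by linear_combination (norm := module) -heq
    rw [this, smul_smul, inv_mul_cancel₀ hpos.ne', one_smul, add_sub_cancel]
  rw [hy_eq]
  exact hs.add_smul_sub_mem_interior hy'' hy' ⟨inv_pos.2 hpos, inv_le_one_of_one_le₀ (by linarith)⟩

lemma sqri_eq_interior [IsTopologicalAddGroup Z] [ContinuousSMul ℝ Z] {s : Set Z}
    (hs : Convex ℝ s) (hint : (interior s).Nonempty) : sqri s = interior s := by
  ext y
  refine ⟨fun hy ↦ mem_interior_of_isLinearSubspace_coneHull hs hint hy.2.1, fun hy ↦ ?_⟩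
  rw [sqri, mem_ofPred_eq, coneHull_sub_eq_univ hy]
  exact ⟨interior_subset hy, ⟨⊤, Submodule.top_coe⟩, isClosed_univ⟩

end Topological

section SetValued

variable {X Y : Type*} [AddCommGroup X] [Module ℝ X] [AddCommGroup Y] [Module ℝ Y]
  {F : X → Set Y}

lemma convex_apply_of_convex_svmGph (hF : Convex ℝ (svmGph F)) (x : X) : Convex ℝ (F x) := by
  intro y₁ hy₁ y₂ hy₂ a b ha hb hab
  have h := hF (x := (x, y₁)) (y := (x, y₂)) hy₁ hy₂ ha hb hab
  rwa [Prod.smul_mk, Prod.smul_mk, Prod.mk_add_mk, ← add_smul, hab, one_smul] at h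

lemma coneHull_apply_sub_eq_preimage {x : X} {y : Y} (hy : y ∈ F x) :
    coneHull (F x - {y}) = LinearMap.inr ℝ X Y ⁻¹' coneHull (svmGph F - {(x, y)}) := by
  ext v
  simp only [mem_preimage, LinearMap.inr_apply, mem_coneHull_sub]
  constructor
  · rintro ⟨c, hc, y', hy', rfl⟩
    exact ⟨c, hc, (x, y'), hy', by simp⟩
  · rintro ⟨c, hc, ⟨x', y'⟩, hp, heq⟩
    simp only [Prod.mk_sub_mk, Prod.smul_mk, Prod.mk.injEq] at heq
    obtain ⟨hx, rfl⟩ := heq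
    rcases smul_eq_zero.1 hx.symm with rfl | hx
    · exact ⟨0, le_rfl, y, hy, by simp⟩
    · obtain rfl := sub_eq_zero.1 hx
      exact ⟨c, hc, y', hp, rfl⟩

lemma coneHull_svmGph_sub_eq [TopologicalSpace Y] [ContinuousAdd Y] [ContinuousSMul ℝ Y]
    (hF : Convex ℝ (svmGph F)) {x : X} {y : Y} (hy : y ∈ interior (F x)) :
    coneHull (svmGph F - {(x, y)}) = Prod.fst ⁻¹' coneHull (svmDom F - {x}) := by
  ext ⟨u, v⟩
  rw [mem_preimage, mem_coneHull_sub, mem_coneHull_sub]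
  constructor
  · rintro ⟨c, hc, ⟨x', y'⟩, hp, heq⟩
    exact ⟨c, hc, x', ⟨y', hp⟩, congrArg Prod.fst heq⟩
  · rintro ⟨c, hc, x', ⟨y', hp⟩, rfl⟩
    rw [← mem_coneHull_sub]
    have hyF : y ∈ F x := interior_subset hy
    have hmove : (c • (x' - x), c • (y' - y)) ∈ coneHull (svmGph F - {(x, y)}) :=
      mem_coneHull_sub.2 ⟨c, hc, (x', y'), hp, rfl⟩
    have hvert : ((0 : X), v - c • (y' - y)) ∈ coneHull (svmGph F - {(x, y)}) := by
      have : v - c • (y' - y) ∈ coneHull (F x - {y}) := by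
        rw [coneHull_sub_eq_univ hy]
        trivial
      rwa [coneHull_apply_sub_eq_preimage hyF] at this
    simpa using add_mem_coneHull_sub hF hyF hmove hvert

variable [TopologicalSpace X] [TopologicalSpace Y] [IsTopologicalAddGroup Y] [ContinuousSMul ℝ Y]

lemma mem_sqri_svmGph_iff (hF : Convex ℝ (svmGph F)) {x : X} {y : Y}
    (hy : y ∈ interior (F x)) : (x, y) ∈ sqri (svmGph F) ↔ x ∈ sqri (svmDom F) := by
  have hclosed {S : Set X} : IsClosed (Prod.fst ⁻¹' S : Set (X × Y)) ↔ IsClosed S :=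
    ⟨fun h ↦ h.preimage (Continuous.prodMk_left (0 : Y)),
      fun h ↦ h.preimage continuous_fst⟩
  simp only [sqri, mem_ofPred_eq, coneHull_svmGph_sub_eq hF hy,
    isLinearSubspace_preimage_fst_iff, hclosed]
  have hyF : y ∈ F x := interior_subset hy
  exact and_congr_left' ⟨fun _ ↦ ⟨y, hyF⟩, fun _ ↦ hyF⟩

lemma mem_interior_of_mem_sqri_svmGph (hF : Convex ℝ (svmGph F)) {x : X} {y : Y}
    (hint : (interior (F x)).Nonempty) (h : (x, y) ∈ sqri (svmGph F)) : y ∈ interior (F x) := by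
  refine mem_interior_of_isLinearSubspace_coneHull (convex_apply_of_convex_svmGph hF x) hint ?_
  rw [coneHull_apply_sub_eq_preimage (F := F) h.1]
  exact IsLinearSubspace.preimage h.2.1 (LinearMap.inr ℝ X Y)

end SetValued

theorem stmt13_general {X Y : Type*}
    [AddCommGroup X] [Module ℝ X] [TopologicalSpace X]
    [AddCommGroup Y] [Module ℝ Y] [TopologicalSpace Y]
    [IsTopologicalAddGroup Y] [ContinuousSMul ℝ Y]
    (F : X → Set Y) (hconv : Convex ℝ (svmGph F))
    (hint : ∀ x ∈ svmDom F, (interior (F x)).Nonempty) :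
    sqri (svmGph F) = {p : X × Y | p.1 ∈ sqri (svmDom F) ∧ p.2 ∈ sqri (F p.1)} := by
  ext ⟨x, y⟩
  rw [mem_ofPred_eq]
  constructor
  · intro h
    have hx : x ∈ svmDom F := ⟨y, h.1⟩
    have hy := mem_interior_of_mem_sqri_svmGph hconv (hint x hx) h
    rw [sqri_eq_interior (convex_apply_of_convex_svmGph hconv x) (hint x hx)]
    exact ⟨(mem_sqri_svmGph_iff hconv hy).1 h, hy⟩
  · rintro ⟨hx, hy⟩
    rw [sqri_eq_interior (convex_apply_of_convex_svmGph hconv x) (hint x hx.1)] at hy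
    exact (mem_sqri_svmGph_iff hconv hy).2 hx

theorem stmt13 {X Y : Type*}
    [AddCommGroup X] [Module ℝ X] [TopologicalSpace X]
    [IsTopologicalAddGroup X] [ContinuousSMul ℝ X] [LocallyConvexSpace ℝ X]
    [AddCommGroup Y] [Module ℝ Y] [TopologicalSpace Y]
    [IsTopologicalAddGroup Y] [ContinuousSMul ℝ Y] [LocallyConvexSpace ℝ Y]
    (F : X → Set Y) (hconv : Convex ℝ (svmGph F))
    (hint : ∀ x ∈ svmDom F, (interior (F x)).Nonempty) :
    sqri (svmGph F) = {p : X × Y | p.1 ∈ sqri (svmDom F) ∧ p.2 ∈ sqri (F p.1)} :=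
  stmt13_general F hconv hint
end
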